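/- Let E ⊂ X be a set of finite perimeter. Let {E_n}_{n=1}^∞ be an increasing sequence of indecomposable sets such that E = ⋃_{n=1}^∞ E_n. Then E is an indecomposable set. -/

import Mathlib

open MeasureTheory Metric Filter Set ENNReal NNReal Topology

/-- A curve: a rectifiable continuous map from a compact interval into `X`,
parametrized by arc length (hence `1`-Lipschitz on `[0, len]`). -/
structure Curve (X : Type*) [MetricSpace X] where
  len : ℝ
  len_nonneg : 0 ≤ len
  toFun : ℝ → X
  lipschitzOn : LipschitzOnWith 1 toFun (Set.Icc 0 len)

namespace Curve

variable {X : Type*} [MetricSpace X]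

/-- A curve is nonconstant if it attains two distinct values. -/
def IsNonconstant (γ : Curve X) : Prop :=
  ∃ s ∈ Set.Icc (0:ℝ) γ.len, ∃ t ∈ Set.Icc (0:ℝ) γ.len, γ.toFun s ≠ γ.toFun t

/-- A curve lies in a set `W`. -/
def IsIn (γ : Curve X) (W : Set X) : Prop :=
  ∀ s ∈ Set.Icc (0:ℝ) γ.len, γ.toFun s ∈ W

end Curve

variable {X : Type*} [MetricSpace X] [MeasurableSpace X] [BorelSpace X]

/-- The curve integral `∫_γ g ds` for an arc-length parametrized curve. -/
noncomputable def curveLintegral (g : X → ℝ≥0∞) (γ : Curve X) : ℝ≥0∞ :=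
  ∫⁻ s in Set.Icc (0:ℝ) γ.len, g (γ.toFun s)

/-- The upper gradient inequality `|u(x) - u(y)| ≤ ∫_γ g ds` along a curve `γ`
with endpoints `x, y`. -/
def UpperGradIneq (g : X → ℝ≥0∞) (u : X → ℝ) (γ : Curve X) : Prop :=
  ENNReal.ofReal |u (γ.toFun 0) - u (γ.toFun γ.len)| ≤ curveLintegral g γ

/-- The 1-modulus of a family of curves. -/
noncomputable def mod1 (μ : Measure X) (Γ : Set (Curve X)) : ℝ≥0∞ :=
  ⨅ (ρ : X → ℝ≥0∞) (_ : Measurable ρ ∧ ∀ γ ∈ Γ, 1 ≤ curveLintegral ρ γ),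
    ∫⁻ x, ρ x ∂μ

/-- `g` is a 1-weak upper gradient of `u` in `W`: the upper gradient inequality
holds for all nonconstant curves in `W` outside a family of 1-modulus zero. -/
def IsWeakUpperGradientOn (μ : Measure X) (g : X → ℝ≥0∞) (u : X → ℝ) (W : Set X) : Prop :=
  Measurable g ∧
    mod1 μ {γ : Curve X | γ.IsNonconstant ∧ γ.IsIn W ∧ ¬ UpperGradIneq g u γ} = 0

/-- `g` is a (strong) upper gradient of `u` in `X`. -/
def IsUpperGradient (g : X → ℝ≥0∞) (u : X → ℝ) : Prop :=
  Measurable g ∧ ∀ γ : Curve X, γ.IsNonconstant → UpperGradIneq g u γ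

/-- `∫_W g_u dμ`: the integral over `W` of the minimal 1-weak upper gradient of `u`
in `W`, equivalently the infimum of `∫_W g dμ` over all 1-weak upper gradients `g`
of `u` in `W`. -/
noncomputable def gradEnergy (μ : Measure X) (u : X → ℝ) (W : Set X) : ℝ≥0∞ :=
  ⨅ (g : X → ℝ≥0∞) (_ : IsWeakUpperGradientOn μ g u W), ∫⁻ x in W, g x ∂μ

/-- `u` is locally Lipschitz on `W`. -/
def LocLipschitzOn (u : X → ℝ) (W : Set X) : Prop :=
  ∀ x ∈ W, ∃ K : ℝ≥0, ∃ t ∈ nhdsWithin x W, LipschitzOnWith K u t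

/-- Convergence `uᵢ → v` in `L¹_loc(W)`. -/
def TendstoL1loc (μ : Measure X) (W : Set X) (u : ℕ → X → ℝ) (v : X → ℝ) : Prop :=
  ∀ W' : Set X, IsOpen W' → IsCompact (closure W') → closure W' ⊆ W →
    Tendsto (fun i => ∫⁻ x in W', ENNReal.ofReal |u i x - v x| ∂μ) atTop (𝓝 0)

/-- The total variation `‖Dv‖(W)` of a function `v` in an open set `W`. -/
noncomputable def variationOn (μ : Measure X) (v : X → ℝ) (W : Set X) : ℝ≥0∞ :=
  ⨅ (u : ℕ → X → ℝ) (_ : (∀ i, LocLipschitzOn (u i) W) ∧ TendstoL1loc μ W u v),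
    Filter.liminf (fun i => gradEnergy μ (u i) W) Filter.atTop

/-- The total variation `‖Dv‖(A)` of a function `v` in an arbitrary set `A`. -/
noncomputable def totalVar (μ : Measure X) (v : X → ℝ) (A : Set X) : ℝ≥0∞ :=
  ⨅ (W : Set X) (_ : IsOpen W ∧ A ⊆ W), variationOn μ v W

/-- The perimeter `P(E, A) = ‖Dχ_E‖(A)`. -/
noncomputable def perimeter (μ : Measure X) (E A : Set X) : ℝ≥0∞ :=
  totalVar μ (Set.indicator E fun _ => (1 : ℝ)) A

/-- The measure `μ` is doubling. -/
def IsDoublingMeasure (μ : Measure X) : Prop :=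
  ∃ C : ℝ≥0∞, 1 ≤ C ∧ ∀ (x : X) (r : ℝ), 0 < r → μ (ball x (2 * r)) ≤ C * μ (ball x r)

/-- The space supports a (1,1)-Poincaré inequality:
`⨍_{B(x,r)} |u - u_{B(x,r)}| dμ ≤ C r ⨍_{B(x,λr)} g dμ` for every ball, every
`u ∈ L¹_loc(X)` and every upper gradient `g` of `u` (stated here multiplied
through by the measures of the two balls). -/
def SupportsPoincare (μ : Measure X) : Prop :=
  ∃ C lam : ℝ, 0 < C ∧ 1 ≤ lam ∧
    ∀ (x : X) (r : ℝ), 0 < r → ∀ (u : X → ℝ) (g : X → ℝ≥0∞),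
      (∀ (y : X) (s : ℝ), IntegrableOn u (ball y s) μ) → IsUpperGradient g u →
        μ (ball x (lam * r)) *
            ∫⁻ y in ball x r, ENNReal.ofReal |u y - ⨍ z in ball x r, u z ∂μ| ∂μ ≤
          ENNReal.ofReal (C * r) * μ (ball x r) * ∫⁻ y in ball x (lam * r), g y ∂μ

/-- `(X, d, μ)` is a PI space: complete, doubling, supporting a (1,1)-Poincaré
inequality. -/
def IsPISpace (μ : Measure X) : Prop :=
  CompleteSpace X ∧ IsDoublingMeasure μ ∧ SupportsPoincare μ

/-- A set `E` of finite perimeter is decomposable in a Borel set `D` if there is a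
partition `{F, G}` of `E ∩ D` into sets of finite perimeter in `D`, both of positive
measure, with `P(E,D) = P(F,D) + P(G,D)`. -/
def IsDecomposableIn (μ : Measure X) (E D : Set X) : Prop :=
  ∃ F G : Set X, MeasurableSet F ∧ MeasurableSet G ∧ Disjoint F G ∧ F ∪ G = E ∩ D ∧
    perimeter μ F D < ⊤ ∧ perimeter μ G D < ⊤ ∧ 0 < μ F ∧ 0 < μ G ∧
    perimeter μ E D = perimeter μ F D + perimeter μ G D

/-- `E` is indecomposable in `D`. -/
def IsIndecomposableIn (μ : Measure X) (E D : Set X) : Prop :=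
  ¬ IsDecomposableIn μ E D

/-- `{F i}_{i ∈ I}` is a (finite or countable) partition of `E` into indecomposable
Borel sets of positive measure and finite perimeter whose perimeters sum to `P(E,X)`;
this is the defining property of the essential connected components `𝒞𝒞ᵉ(E)`. -/
def IsEssentialPartition (μ : Measure X) (E : Set X) (I : Set ℕ) (F : ℕ → Set X) : Prop :=
  (∀ i ∈ I, MeasurableSet (F i)) ∧
  (∀ i ∈ I, ∀ j ∈ I, i ≠ j → Disjoint (F i) (F j)) ∧
  (⋃ i ∈ I, F i) = E ∧
  (∀ i ∈ I, 0 < μ (F i)) ∧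
  (∀ i ∈ I, perimeter μ (F i) Set.univ < ⊤) ∧
  (∀ i ∈ I, IsIndecomposableIn μ (F i) Set.univ) ∧
  perimeter μ E Set.univ = ∑' i : I, perimeter μ (F i.1) Set.univ

/-- Given a decomposition `{G i}_{i ∈ I}` of `X ∖ E` into essential connected
components, the saturation of `E`: the union of `E` and its holes, i.e. the
components of finite measure. -/
def saturationOf (μ : Measure X) (E : Set X) (I : Set ℕ) (G : ℕ → Set X) : Set X :=
  E ∪ ⋃ (i : ℕ) (_ : i ∈ I ∧ μ (G i) < ⊤), G i

/-- The measure-theoretic boundary `∂* E`: points where both `E` and its complement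
have strictly positive upper density. -/
def mtBoundary (μ : Measure X) (E : Set X) : Set X :=
  {x : X |
    0 < Filter.limsup (fun r => μ (ball x r ∩ E) / μ (ball x r)) (nhdsWithin 0 (Set.Ioi 0)) ∧
    0 < Filter.limsup (fun r => μ (ball x r \ E) / μ (ball x r)) (nhdsWithin 0 (Set.Ioi 0))}

/-- The restricted codimension-one Hausdorff content `ℋ_R`. -/
noncomputable def codimOneContent (μ : Measure X) (R : ℝ) (A : Set X) : ℝ≥0∞ :=
  ⨅ (s : Set (X × ℝ))
    (_ : s.Countable ∧ (∀ p ∈ s, 0 < p.2 ∧ p.2 ≤ R) ∧ A ⊆ ⋃ p ∈ s, ball p.1 p.2),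
    ∑' p : s, μ (ball (p : X × ℝ).1 (p : X × ℝ).2) / ENNReal.ofReal (p : X × ℝ).2

/-- The codimension-one Hausdorff measure `ℋ(A) = lim_{R → 0} ℋ_R(A)`. -/
noncomputable def codimOneHausdorff (μ : Measure X) (A : Set X) : ℝ≥0∞ :=
  ⨆ (R : ℝ) (_ : 0 < R), codimOneContent μ R A

/-!
If `E = F ∪ G` were a decomposition, then for large `n` both `F ∩ Eₙ` and `G ∩ Eₙ` have positive
measure, since `Eₙ ↑ E`. Submodularity of the perimeter, `P(A ∩ B) + P(A ∪ B) ≤ P(A) + P(B)`,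
applied to `(F, Eₙ)`, `(G, Eₙ)` and `(F ∪ Eₙ, G ∪ Eₙ)` gives
`P(F ∩ Eₙ) + P(G ∩ Eₙ) + P(E) ≤ P(F) + P(G) + P(Eₙ)`, and `P(E) = P(F) + P(G)` turns this into a
decomposition of `Eₙ`.

Submodularity is the lattice inequality `‖D min(u,v)‖ + ‖D max(u,v)‖ ≤ ‖Du‖ + ‖Dv‖` for
indicators. Take locally Lipschitz approximations `fᵢ → u`, `eᵢ → v` and shift `eᵢ` by small
constants so that `{fᵢ = eᵢ}` is null. Then `g_f` on `{f < e}` and `g_e` on `{e < f}` is a 1-weak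
upper gradient of `min(f, e)`, and symmetrically for `max(f, e)`, so the two energies add up to at
most those of `f` and `e`. Along a single curve this locality is a continuous induction in time,
in which increments near the contact set `{f = e}` are charged to `g_f + g_e` on a small open set.
-/

section Preliminaries

lemma ofReal_abs_sub_le_add (x y z : ℝ) :
    ENNReal.ofReal |x - z| ≤ ENNReal.ofReal |x - y| + ENNReal.ofReal |y - z| :=
  (ENNReal.ofReal_le_ofReal (abs_sub_le x y z)).trans ENNReal.ofReal_add_le

lemma abs_min_sub_min_le_add (a b c d : ℝ) : |min a b - min c d| ≤ |a - c| + |b - d| :=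
  (abs_min_sub_min_le_max a b c d).trans (max_le_add_of_nonneg (abs_nonneg _) (abs_nonneg _))

lemma abs_max_sub_max_le_add (a b c d : ℝ) : |max a b - max c d| ≤ |a - c| + |b - d| :=
  (abs_max_sub_max_le_max a b c d).trans (max_le_add_of_nonneg (abs_nonneg _) (abs_nonneg _))

lemma exists_Icc_subset_of_mem_nhdsGE {s : Set ℝ} {t b : ℝ} (hs : s ∈ 𝓝[≥] t) (htb : t < b) :
    ∃ t' ∈ Ioc t b, Icc t t' ⊆ s := by
  obtain ⟨u, htu, hu⟩ := mem_nhdsGE_iff_exists_Icc_subset.mp hs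
  exact ⟨min u b, ⟨lt_min htu htb, min_le_right _ _⟩,
    (Icc_subset_Icc_right (min_le_left _ _)).trans hu⟩

lemma liminf_add_liminf_le_of_forall_add_le {a b : ℕ → ℝ≥0∞} {C : ℝ≥0∞}
    (h : ∀ i, a i + b i ≤ C) : liminf a atTop + liminf b atTop ≤ C := by
  rw [liminf_eq_iSup_iInf_of_nat, liminf_eq_iSup_iInf_of_nat]
  refine ENNReal.iSup_add_iSup_le fun m n => ?_
  calc (⨅ i ≥ m, a i) + ⨅ i ≥ n, b i ≤ a (max m n) + b (max m n) :=
        add_le_add (iInf₂_le _ (le_max_left m n)) (iInf₂_le _ (le_max_right m n))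
    _ ≤ C := h _

lemma indicator_one_inter {α : Type*} (A B : Set α) :
    (A ∩ B).indicator (fun _ => (1 : ℝ)) =
      fun x => min (A.indicator (fun _ => 1) x) (B.indicator (fun _ => 1) x) := by
  ext x
  by_cases hA : x ∈ A <;> by_cases hB : x ∈ B <;> simp [hA, hB]

lemma indicator_one_union {α : Type*} (A B : Set α) :
    (A ∪ B).indicator (fun _ => (1 : ℝ)) =
      fun x => max (A.indicator (fun _ => 1) x) (B.indicator (fun _ => 1) x) := by
  ext x
  by_cases hA : x ∈ A <;> by_cases hB : x ∈ B <;> simp [hA, hB]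

variable {α : Type*} [MeasurableSpace α] {μ : Measure α}

lemma eventually_measure_inter_pos {s : ℕ → Set α} (hs : Monotone s) {F : Set α}
    (hF : F ⊆ ⋃ n, s n) (hμF : 0 < μ F) : ∀ᶠ n in atTop, 0 < μ (F ∩ s n) := by
  have hlim := tendsto_measure_iUnion_atTop (μ := μ) fun m n hmn =>
    inter_subset_inter_right F (hs hmn)
  rw [← inter_iUnion, inter_eq_left.mpr hF] at hlim
  exact hlim.eventually_const_lt hμF

lemma exists_tendsto_zero_measure_eq_add_eq_zero [SigmaFinite μ] {f e : ℕ → α → ℝ}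
    (hf : ∀ i, Measurable (f i)) (he : ∀ i, Measurable (e i)) :
    ∃ c : ℕ → ℝ, Tendsto c atTop (𝓝 0) ∧ ∀ i, μ {x | f i x = e i x + c i} = 0 := by
  have (i : ℕ) : ∃ c ∈ Ioo (0 : ℝ) (1 / (i + 1)), μ {x | f i x = e i x + c} = 0 := by
    -- only countably many level sets of `f i - e i` have positive measure
    obtain ⟨c, hc, hcI⟩ := ((Measure.countable_meas_level_set_pos (μ := μ)
      ((hf i).sub (he i))).dense_compl ℝ).exists_between
        (by positivity : (0 : ℝ) < 1 / (i + 1))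
    refine ⟨c, hcI, ?_⟩
    simpa [sub_eq_iff_eq_add'] using hc
  choose c hcI hc using this
  exact ⟨c, tendsto_of_tendsto_of_tendsto_of_le_of_le tendsto_const_nhds
    tendsto_one_div_add_atTop_nhds_zero_nat (fun i => (hcI i).1.le) (fun i => (hcI i).2.le), hc⟩

end Preliminaries

section OneDimensional

lemma ofReal_abs_sub_le_measure_Ioc {φ : ℝ → ℝ} {ν : Measure ℝ} {a b : ℝ} (hab : a ≤ b)
    (hφ : ContinuousOn φ (Icc a b))
    (hstep : ∀ t ∈ Ico a b, ∃ t' ∈ Ioc t b, ENNReal.ofReal |φ t' - φ t| ≤ ν (Ioc t t')) :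
    ENNReal.ofReal |φ b - φ a| ≤ ν (Ioc a b) := by
  set S := {t ∈ Icc a b | ENNReal.ofReal |φ t - φ a| ≤ ν (Ioc a t)}
  have haS : a ∈ S := ⟨⟨le_rfl, hab⟩, by simp⟩
  have hbdd : BddAbove S := ⟨b, fun t ht => ht.1.2⟩
  set t₀ := sSup S
  have ht₀ : t₀ ∈ Icc a b := ⟨le_csSup hbdd haS, csSup_le ⟨a, haS⟩ fun t ht => ht.1.2⟩
  -- `S` is closed from the left: `φ` is continuous and `t ↦ ν (Ioc a t)` is monotone
  have ht₀S : t₀ ∈ S := by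
    refine ⟨ht₀, ENNReal.le_of_forall_pos_le_add fun δ hδ _ => ?_⟩
    obtain ⟨θ, hθ, hφθ⟩ := Metric.continuousWithinAt_iff.mp (hφ t₀ ht₀) δ hδ
    obtain ⟨t, htS, htθ⟩ := exists_lt_of_lt_csSup ⟨a, haS⟩ (sub_lt_self t₀ hθ)
    have htt₀ : t ≤ t₀ := le_csSup hbdd htS
    have hδt : |φ t₀ - φ t| ≤ δ := by
      rw [abs_sub_comm, ← Real.dist_eq]
      exact (hφθ htS.1 (by rw [Real.dist_eq, abs_sub_lt_iff]; constructor <;> linarith)).le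
    calc ENNReal.ofReal |φ t₀ - φ a|
        ≤ ENNReal.ofReal |φ t₀ - φ t| + ENNReal.ofReal |φ t - φ a| :=
          ofReal_abs_sub_le_add _ _ _
      _ ≤ δ + ν (Ioc a t₀) := by
          gcongr
          · exact (ENNReal.ofReal_le_ofReal hδt).trans_eq ENNReal.ofReal_coe_nnreal
          · exact htS.2.trans (measure_mono (Ioc_subset_Ioc_right htt₀))
      _ = ν (Ioc a t₀) + δ := add_comm _ _
  have hbt₀ : t₀ = b := by
    by_contra hne
    obtain ⟨t', ht', hinc⟩ := hstep t₀ ⟨ht₀.1, lt_of_le_of_ne ht₀.2 hne⟩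
    have ht'S : t' ∈ S := by
      refine ⟨⟨ht₀.1.trans ht'.1.le, ht'.2⟩, ?_⟩
      calc ENNReal.ofReal |φ t' - φ a|
          ≤ ENNReal.ofReal |φ t' - φ t₀| + ENNReal.ofReal |φ t₀ - φ a| :=
            ofReal_abs_sub_le_add _ _ _
        _ ≤ ν (Ioc t₀ t') + ν (Ioc a t₀) := add_le_add hinc ht₀S.2
        _ = ν (Ioc a t') := by
            rw [add_comm, ← measure_union (Ioc_disjoint_Ioc_of_le le_rfl) measurableSet_Ioc,
              Ioc_union_Ioc_eq_Ioc ht₀.1 ht'.1.le]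
    exact (le_csSup hbdd ht'S).not_gt ht'.1
  exact hbt₀ ▸ ht₀S.2

def IsUpperGradOnIcc (p : ℝ → ℝ) (gp : ℝ → ℝ≥0∞) (a b : ℝ) : Prop :=
  ∀ s t, a ≤ s → s ≤ t → t ≤ b → ENNReal.ofReal |p s - p t| ≤ ∫⁻ r in Icc s t, gp r

/-- The value `⊤` on `{f = e}` makes this an upper gradient of `min f e` along every curve; it
costs nothing once `{f = e}` is null. -/
noncomputable def minUpperGrad {α : Type*} (f e : α → ℝ) (g h : α → ℝ≥0∞) (x : α) : ℝ≥0∞ :=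
  if f x < e x then g x else if e x < f x then h x else ⊤

section minUpperGrad

variable {α : Type*} {f e : α → ℝ} {g h : α → ℝ≥0∞} {x : α}

lemma minUpperGrad_comm : minUpperGrad e f h g = minUpperGrad f e g h := by
  ext x
  by_cases hfe : f x < e x
  · simp [minUpperGrad, hfe, hfe.not_gt]
  · simp [minUpperGrad, hfe]

lemma minUpperGrad_neg : minUpperGrad (-f) (-e) g h = minUpperGrad e f g h := by
  ext x
  simp only [minUpperGrad, Pi.neg_apply, neg_lt_neg_iff]

lemma minUpperGrad_of_lt (hx : f x < e x) : minUpperGrad f e g h x = g x := if_pos hx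

lemma minUpperGrad_of_eq (hx : f x = e x) : minUpperGrad f e g h x = ⊤ := by
  simp [minUpperGrad, hx]

lemma minUpperGrad_add_minUpperGrad_swap (hx : f x ≠ e x) :
    minUpperGrad f e g h x + minUpperGrad e f g h x = g x + h x := by
  rcases hx.lt_or_gt with hlt | hlt
  · simp [minUpperGrad, hlt, hlt.not_gt]
  · simp [minUpperGrad, hlt, hlt.not_gt, add_comm]

lemma measurable_minUpperGrad [MeasurableSpace α] (hf : Measurable f) (he : Measurable e)
    (hg : Measurable g) (hh : Measurable h) : Measurable (minUpperGrad f e g h) :=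
  Measurable.ite (measurableSet_lt hf he) hg
    (Measurable.ite (measurableSet_lt he hf) hh measurable_const)

end minUpperGrad

variable {p q : ℝ → ℝ} {gp gq : ℝ → ℝ≥0∞} {a b t : ℝ}

lemma exists_ofReal_abs_min_sub_min_le_of_lt (hp : ContinuousOn p (Icc a b))
    (hq : ContinuousOn q (Icc a b)) (hgp : IsUpperGradOnIcc p gp a b) (ht : t ∈ Ico a b)
    (hlt : p t < q t) :
    ∃ t' ∈ Ioc t b, ENNReal.ofReal |min (p t') (q t') - min (p t) (q t)| ≤
      ∫⁻ r in Ioc t t', minUpperGrad p q gp gq r := by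
  have htI : t ∈ Icc a b := Ico_subset_Icc_self ht
  have hnhds : {r | p r < q r} ∈ 𝓝[≥] t :=
    nhdsWithin_le_of_mem (mem_of_superset (Icc_mem_nhdsGE ht.2) (Icc_subset_Icc_left ht.1))
      ((hp t htI).eventually_lt (hq t htI) hlt)
  obtain ⟨t', ht', hsub⟩ := exists_Icc_subset_of_mem_nhdsGE hnhds ht.2
  refine ⟨t', ht', ?_⟩
  have hmin : ∀ r ∈ Icc t t', min (p r) (q r) = p r := fun r hr => min_eq_left (hsub hr).le
  rw [hmin t' (right_mem_Icc.mpr ht'.1.le), hmin t (left_mem_Icc.mpr ht'.1.le), abs_sub_comm,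
    setLIntegral_congr Ioc_ae_eq_Icc,
    setLIntegral_congr_fun measurableSet_Icc fun r hr => minUpperGrad_of_lt (hsub hr)]
  exact hgp t t' ht.1 ht'.1.le ht'.2

lemma exists_ofReal_abs_min_sub_min_le_of_ne (hp : ContinuousOn p (Icc a b))
    (hq : ContinuousOn q (Icc a b)) (hgp : IsUpperGradOnIcc p gp a b)
    (hgq : IsUpperGradOnIcc q gq a b) (ht : t ∈ Ico a b) (hne : p t ≠ q t) :
    ∃ t' ∈ Ioc t b, ENNReal.ofReal |min (p t') (q t') - min (p t) (q t)| ≤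
      ∫⁻ r in Ioc t t', minUpperGrad p q gp gq r := by
  rcases hne.lt_or_gt with hlt | hlt
  · exact exists_ofReal_abs_min_sub_min_le_of_lt hp hq hgp ht hlt
  · obtain ⟨t', ht', hinc⟩ := exists_ofReal_abs_min_sub_min_le_of_lt hq hp hgq ht hlt
    refine ⟨t', ht', ?_⟩
    rwa [min_comm (p t'), min_comm (p t), ← minUpperGrad_comm]

lemma exists_ofReal_abs_min_sub_min_le_add (hgp : IsUpperGradOnIcc p gp a b)
    (hgq : IsUpperGradOnIcc q gq a b) (ht : t ∈ Ico a b) {O : Set ℝ} (hO : O ∈ 𝓝 t) :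
    ∃ t' ∈ Ioc t b, Ioc t t' ⊆ O ∧ ENNReal.ofReal |min (p t') (q t') - min (p t) (q t)| ≤
      ∫⁻ r in Ioc t t', (gp r + gq r) := by
  obtain ⟨t', ht', hsub⟩ := exists_Icc_subset_of_mem_nhdsGE (mem_nhdsWithin_of_mem_nhds hO) ht.2
  refine ⟨t', ht', Ioc_subset_Icc_self.trans hsub, ?_⟩
  calc ENNReal.ofReal |min (p t') (q t') - min (p t) (q t)|
      ≤ ENNReal.ofReal |p t - p t'| + ENNReal.ofReal |q t - q t'| := by
        rw [abs_sub_comm (p t), abs_sub_comm (q t)]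
        exact (ENNReal.ofReal_le_ofReal (abs_min_sub_min_le_add _ _ _ _)).trans
          ENNReal.ofReal_add_le
    _ ≤ (∫⁻ r in Icc t t', gp r) + ∫⁻ r in Icc t t', gq r :=
        add_le_add (hgp t t' ht.1 ht'.1.le ht'.2) (hgq t t' ht.1 ht'.1.le ht'.2)
    _ ≤ ∫⁻ r in Ioc t t', (gp r + gq r) := by
        rw [setLIntegral_congr Ioc_ae_eq_Icc]
        exact le_lintegral_add _ _

lemma ofReal_abs_min_sub_min_le (hab : a ≤ b) (hp : ContinuousOn p (Icc a b))
    (hq : ContinuousOn q (Icc a b)) (hgp : IsUpperGradOnIcc p gp a b)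
    (hgq : IsUpperGradOnIcc q gq a b) (hint : ∫⁻ r in Icc a b, (gp r + gq r) ≠ ⊤) :
    ENNReal.ofReal |min (p a) (q a) - min (p b) (q b)| ≤
      ∫⁻ r in Icc a b, minUpperGrad p q gp gq r := by
  set Z := Icc a b ∩ (fun r => p r - q r) ⁻¹' {0}
  have hZ : IsClosed Z :=
    (hp.sub hq).preimage_isClosed_of_isClosed isClosed_Icc isClosed_singleton
  by_cases hZ0 : volume Z = 0
  swap
  · have htop : ∫⁻ r in Icc a b, minUpperGrad p q gp gq r = ⊤ := by
      refine top_unique (le_trans ?_ (lintegral_mono_set (s := Z) inter_subset_left))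
      rw [setLIntegral_congr_fun hZ.measurableSet fun r hr =>
        minUpperGrad_of_eq (sub_eq_zero.mp hr.2), setLIntegral_const, ENNReal.top_mul hZ0]
    rw [htop]
    exact le_top
  refine ENNReal.le_of_forall_pos_le_add fun ε hε _ => ?_
  set κ := (volume.restrict (Icc a b)).withDensity fun r => gp r + gq r
  have hκ (s : Set ℝ) (hs : MeasurableSet s) : κ s = ∫⁻ r in s ∩ Icc a b, (gp r + gq r) := by
    rw [withDensity_apply _ hs, Measure.restrict_restrict hs]
  have : IsFiniteMeasure κ := ⟨by rw [hκ univ MeasurableSet.univ, univ_inter]; exact hint.lt_top⟩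
  have hκZ : κ Z < ε := by
    rw [hκ Z hZ.measurableSet,
      Measure.restrict_eq_zero.mpr (measure_mono_null inter_subset_left hZ0),
      lintegral_zero_measure]
    exact_mod_cast hε
  -- near the contact set `Z`, increments are charged to `gp + gq` on a small open `O ⊇ Z`
  obtain ⟨O, hZO, hO, hκO⟩ := Z.exists_isOpen_lt_of_lt _ hκZ
  set ν := volume.withDensity (minUpperGrad p q gp gq) + κ.restrict O
  have hstep : ∀ t ∈ Ico a b, ∃ t' ∈ Ioc t b,
      ENNReal.ofReal |min (p t') (q t') - min (p t) (q t)| ≤ ν (Ioc t t') := by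
    intro t ht
    by_cases htO : t ∈ O
    · obtain ⟨t', ht', hsub, hinc⟩ :=
        exists_ofReal_abs_min_sub_min_le_add hgp hgq ht (hO.mem_nhds htO)
      refine ⟨t', ht', hinc.trans ?_⟩
      have hIoc : Ioc t t' ⊆ Icc a b := fun r hr => ⟨ht.1.trans hr.1.le, hr.2.trans ht'.2⟩
      rw [Measure.add_apply, Measure.restrict_apply measurableSet_Ioc, inter_eq_left.mpr hsub,
        hκ _ measurableSet_Ioc, inter_eq_left.mpr hIoc]
      exact le_add_self
    · obtain ⟨t', ht', hinc⟩ := exists_ofReal_abs_min_sub_min_le_of_ne hp hq hgp hgq ht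
        fun h => htO (hZO ⟨Ico_subset_Icc_self ht, sub_eq_zero.mpr h⟩)
      refine ⟨t', ht', hinc.trans ?_⟩
      rw [Measure.add_apply, withDensity_apply _ measurableSet_Ioc]
      exact le_self_add
  calc ENNReal.ofReal |min (p a) (q a) - min (p b) (q b)|
      = ENNReal.ofReal |min (p b) (q b) - min (p a) (q a)| := by rw [abs_sub_comm]
    _ ≤ ν (Ioc a b) := ofReal_abs_sub_le_measure_Ioc hab (hp.inf hq) hstep
    _ ≤ (∫⁻ r in Icc a b, minUpperGrad p q gp gq r) + ε := by
        rw [Measure.add_apply, withDensity_apply _ measurableSet_Ioc,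
          Measure.restrict_apply measurableSet_Ioc]
        exact add_le_add (lintegral_mono_set Ioc_subset_Icc_self)
          ((measure_mono inter_subset_right).trans hκO.le)

end OneDimensional

section Curves

variable {X : Type*} [MetricSpace X]

namespace Curve

lemma toFun_zero_eq_toFun_len_of_not_isNonconstant {γ : Curve X} (h : ¬ γ.IsNonconstant) :
    γ.toFun 0 = γ.toFun γ.len := by
  by_contra hne
  exact h ⟨0, ⟨le_rfl, γ.len_nonneg⟩, γ.len, ⟨γ.len_nonneg, le_rfl⟩, hne⟩

noncomputable def restrict (γ : Curve X) {a b : ℝ} (ha : 0 ≤ a) (hab : a ≤ b)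
    (hb : b ≤ γ.len) : Curve X where
  len := b - a
  len_nonneg := sub_nonneg.mpr hab
  toFun s := γ.toFun (s + a)
  lipschitzOn := by
    have hmaps : MapsTo (· + a) (Icc 0 (b - a)) (Icc 0 γ.len) := fun s hs =>
      ⟨by linarith [hs.1], by linarith [hs.2]⟩
    have h := γ.lipschitzOn.comp (isometry_add_right a).lipschitz.lipschitzOnWith hmaps
    rw [mul_one] at h
    exact h

variable (γ : Curve X) {a b : ℝ} (ha : 0 ≤ a) (hab : a ≤ b) (hb : b ≤ γ.len)

@[simp] lemma restrict_toFun_zero : (γ.restrict ha hab hb).toFun 0 = γ.toFun a := by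
  simp [restrict]

@[simp] lemma restrict_toFun_len :
    (γ.restrict ha hab hb).toFun (γ.restrict ha hab hb).len = γ.toFun b := by
  simp [restrict]

end Curve

lemma curveLintegral_restrict (g : X → ℝ≥0∞) (γ : Curve X) {a b : ℝ} (ha : 0 ≤ a)
    (hab : a ≤ b) (hb : b ≤ γ.len) :
    curveLintegral g (γ.restrict ha hab hb) = ∫⁻ s in Icc a b, g (γ.toFun s) := by
  change ∫⁻ s in Icc 0 (b - a), g (γ.toFun (s + a)) = _
  refine ((measurePreserving_add_right volume a).setLIntegral_comp_emb
    (measurableEmbedding_addRight a) (fun s => g (γ.toFun s)) _).trans ?_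
  rw [image_add_const_Icc, zero_add, sub_add_cancel]

def curvesWithSubcurveIn (Γ : Set (Curve X)) : Set (Curve X) :=
  {γ | ∃ (a b : ℝ) (ha : 0 ≤ a) (hab : a ≤ b) (hb : b ≤ γ.len), γ.restrict ha hab hb ∈ Γ}

/-- `IsWeakUpperGradientOn μ g u W` unfolds to
`Measurable g ∧ mod1 μ (exceptionalCurves g u W) = 0`. -/
def exceptionalCurves (g : X → ℝ≥0∞) (u : X → ℝ) (W : Set X) : Set (Curve X) :=
  {γ | γ.IsNonconstant ∧ γ.IsIn W ∧ ¬ UpperGradIneq g u γ}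

lemma isUpperGradOnIcc_of_notMem_curvesWithSubcurveIn {g : X → ℝ≥0∞} {u : X → ℝ}
    {γ : Curve X} (hγ : γ ∉ curvesWithSubcurveIn (exceptionalCurves g u univ)) :
    IsUpperGradOnIcc (u ∘ γ.toFun) (g ∘ γ.toFun) 0 γ.len := by
  intro a b ha hab hb
  by_cases hnc : (γ.restrict ha hab hb).IsNonconstant
  · have hineq : UpperGradIneq g u (γ.restrict ha hab hb) := by
      by_contra hbad
      exact hγ ⟨a, b, ha, hab, hb, hnc, fun _ _ => mem_univ _, hbad⟩
    simpa [UpperGradIneq, curveLintegral_restrict] using hineq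
  · have hconst := Curve.toFun_zero_eq_toFun_len_of_not_isNonconstant hnc
    simp only [Curve.restrict_toFun_zero, Curve.restrict_toFun_len] at hconst
    simp [hconst]

end Curves

section Modulus

variable {X : Type*} [MetricSpace X] [MeasurableSpace X] (μ : Measure X)

lemma mod1_le_lintegral {Γ : Set (Curve X)} {ρ : X → ℝ≥0∞} (hρ : Measurable ρ)
    (hadm : ∀ γ ∈ Γ, 1 ≤ curveLintegral ρ γ) : mod1 μ Γ ≤ ∫⁻ x, ρ x ∂μ :=
  iInf₂_le ρ ⟨hρ, hadm⟩

lemma mod1_mono {Γ₁ Γ₂ : Set (Curve X)} (h : Γ₁ ⊆ Γ₂) : mod1 μ Γ₁ ≤ mod1 μ Γ₂ :=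
  le_iInf₂ fun _ hρ => mod1_le_lintegral μ hρ.1 fun γ hγ => hρ.2 γ (h hγ)

lemma mod1_union_le (Γ₁ Γ₂ : Set (Curve X)) : mod1 μ (Γ₁ ∪ Γ₂) ≤ mod1 μ Γ₁ + mod1 μ Γ₂ := by
  conv_rhs => rw [mod1, mod1, iInf_subtype', iInf_subtype']
  refine ENNReal.le_iInf_add_iInf fun ⟨ρ₁, hρ₁⟩ ⟨ρ₂, hρ₂⟩ => ?_
  rw [← lintegral_add_left hρ₁.1]
  refine mod1_le_lintegral μ (hρ₁.1.add hρ₂.1) ?_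
  rintro γ (hγ | hγ)
  · exact (hρ₁.2 γ hγ).trans (lintegral_mono fun _ => le_self_add)
  · exact (hρ₂.2 γ hγ).trans (lintegral_mono fun _ => le_add_self)

lemma mod1_union_eq_zero {Γ₁ Γ₂ : Set (Curve X)} (h₁ : mod1 μ Γ₁ = 0) (h₂ : mod1 μ Γ₂ = 0) :
    mod1 μ (Γ₁ ∪ Γ₂) = 0 :=
  nonpos_iff_eq_zero.mp ((mod1_union_le μ Γ₁ Γ₂).trans_eq (by rw [h₁, h₂, add_zero]))

lemma mod1_curvesWithSubcurveIn_le (Γ : Set (Curve X)) :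
    mod1 μ (curvesWithSubcurveIn Γ) ≤ mod1 μ Γ := by
  refine le_iInf₂ fun ρ hρ => mod1_le_lintegral μ hρ.1 ?_
  rintro γ ⟨a, b, ha, hab, hb, hγ⟩
  refine (hρ.2 _ hγ).trans ?_
  rw [curveLintegral_restrict]
  exact lintegral_mono_set (Icc_subset_Icc ha hb)

lemma mod1_setOf_curveLintegral_eq_top {ρ : X → ℝ≥0∞} (hρ : Measurable ρ)
    (hint : ∫⁻ x, ρ x ∂μ ≠ ⊤) : mod1 μ {γ | curveLintegral ρ γ = ⊤} = 0 := by
  have hle (n : ℕ) :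
      mod1 μ {γ | curveLintegral ρ γ = ⊤} ≤ (n : ℝ≥0∞)⁻¹ * ∫⁻ x, ρ x ∂μ := by
    rw [← lintegral_const_mul _ hρ]
    refine mod1_le_lintegral μ (hρ.const_mul _) fun γ hγ => ?_
    calc 1 ≤ (n : ℝ≥0∞)⁻¹ * curveLintegral ρ γ := by
          rw [show curveLintegral ρ γ = ⊤ from hγ, ENNReal.mul_top (by simp)]
          exact le_top
      _ ≤ curveLintegral (fun x => (n : ℝ≥0∞)⁻¹ * ρ x) γ := lintegral_const_mul_le _ _
  have hlim : Tendsto (fun n : ℕ => (n : ℝ≥0∞)⁻¹ * ∫⁻ x, ρ x ∂μ) atTop (𝓝 0) := by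
    simpa using ENNReal.Tendsto.mul_const ENNReal.tendsto_inv_nat_nhds_zero (Or.inr hint)
  exact nonpos_iff_eq_zero.mp (ge_of_tendsto' hlim hle)

end Modulus

section WeakUpperGradients

variable {X : Type*} [MetricSpace X] [MeasurableSpace X] {μ : Measure X}

lemma IsWeakUpperGradientOn.congr_abs {g : X → ℝ≥0∞} {u v : X → ℝ} {W : Set X}
    (hg : IsWeakUpperGradientOn μ g u W) (huv : ∀ x y, |v x - v y| = |u x - u y|) :
    IsWeakUpperGradientOn μ g v W := by
  refine ⟨hg.1, ?_⟩
  have hsame : exceptionalCurves g v W = exceptionalCurves g u W := by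
    simp only [exceptionalCurves, UpperGradIneq, huv]
  change mod1 μ (exceptionalCurves g v W) = 0
  rw [hsame]
  exact hg.2

lemma gradEnergy_le_setLIntegral {g : X → ℝ≥0∞} {u : X → ℝ} {W : Set X}
    (hg : IsWeakUpperGradientOn μ g u W) : gradEnergy μ u W ≤ ∫⁻ x in W, g x ∂μ :=
  iInf₂_le g hg

lemma gradEnergy_congr_abs {u v : X → ℝ} {W : Set X}
    (huv : ∀ x y, |v x - v y| = |u x - u y|) : gradEnergy μ v W = gradEnergy μ u W :=
  le_antisymm (le_iInf₂ fun _ hg => gradEnergy_le_setLIntegral (hg.congr_abs huv))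
    (le_iInf₂ fun _ hg => gradEnergy_le_setLIntegral (hg.congr_abs fun x y => (huv x y).symm))

lemma gradEnergy_add_const (u : X → ℝ) (c : ℝ) (W : Set X) :
    gradEnergy μ (fun x => u x + c) W = gradEnergy μ u W :=
  gradEnergy_congr_abs fun x y => by rw [add_sub_add_right_eq_sub]

variable [BorelSpace X] {f e : X → ℝ} {g h : X → ℝ≥0∞}

lemma IsWeakUpperGradientOn.min (hf : Continuous f) (he : Continuous e)
    (hg : IsWeakUpperGradientOn μ g f univ) (hh : IsWeakUpperGradientOn μ h e univ)
    (hint : ∫⁻ x, (g x + h x) ∂μ ≠ ⊤) :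
    IsWeakUpperGradientOn μ (minUpperGrad f e g h) (fun x => min (f x) (e x)) univ := by
  refine ⟨measurable_minUpperGrad hf.measurable he.measurable hg.1 hh.1, ?_⟩
  have hnull : mod1 μ (curvesWithSubcurveIn (exceptionalCurves g f univ) ∪
      curvesWithSubcurveIn (exceptionalCurves h e univ) ∪
      {γ | curveLintegral (fun x => g x + h x) γ = ⊤}) = 0 :=
    mod1_union_eq_zero μ (mod1_union_eq_zero μ
      (nonpos_iff_eq_zero.mp ((mod1_curvesWithSubcurveIn_le μ _).trans hg.2.le))
      (nonpos_iff_eq_zero.mp ((mod1_curvesWithSubcurveIn_le μ _).trans hh.2.le)))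
      (mod1_setOf_curveLintegral_eq_top μ (hg.1.add hh.1) hint)
  refine nonpos_iff_eq_zero.mp ((mod1_mono μ fun γ hγ => ?_).trans hnull.le)
  by_contra hgood
  simp only [mem_union, not_or] at hgood
  obtain ⟨⟨hγf, hγe⟩, hγint⟩ := hgood
  have hγc := γ.lipschitzOn.continuousOn
  exact hγ.2.2 (ofReal_abs_min_sub_min_le γ.len_nonneg (hf.comp_continuousOn hγc)
    (he.comp_continuousOn hγc) (isUpperGradOnIcc_of_notMem_curvesWithSubcurveIn hγf)
    (isUpperGradOnIcc_of_notMem_curvesWithSubcurveIn hγe) hγint)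

lemma IsWeakUpperGradientOn.max (hf : Continuous f) (he : Continuous e)
    (hg : IsWeakUpperGradientOn μ g f univ) (hh : IsWeakUpperGradientOn μ h e univ)
    (hint : ∫⁻ x, (g x + h x) ∂μ ≠ ⊤) :
    IsWeakUpperGradientOn μ (minUpperGrad e f g h) (fun x => max (f x) (e x)) univ := by
  have hneg := (hg.congr_abs (v := fun x => -f x) fun x y => by
      rw [neg_sub_neg, abs_sub_comm]).min hf.neg he.neg
    (hh.congr_abs (v := fun x => -e x) fun x y => by rw [neg_sub_neg, abs_sub_comm]) hint
  rw [minUpperGrad_neg] at hneg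
  refine hneg.congr_abs fun x y => ?_
  simp only [Pi.neg_apply, min_neg_neg, neg_sub_neg]
  exact abs_sub_comm _ _

lemma gradEnergy_min_add_gradEnergy_max_le (hf : Continuous f) (he : Continuous e)
    (hnull : μ {x | f x = e x} = 0) :
    gradEnergy μ (fun x => min (f x) (e x)) univ +
        gradEnergy μ (fun x => max (f x) (e x)) univ ≤
      gradEnergy μ f univ + gradEnergy μ e univ := by
  conv_rhs => rw [gradEnergy, gradEnergy, iInf_subtype', iInf_subtype']
  refine ENNReal.le_iInf_add_iInf fun ⟨g, hg⟩ ⟨h, hh⟩ => ?_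
  rw [Measure.restrict_univ, ← lintegral_add_left hg.1]
  rcases eq_or_ne (∫⁻ x, (g x + h x) ∂μ) ⊤ with htop | hint
  · rw [htop]
    exact le_top
  have hae : ∀ᵐ x ∂μ, minUpperGrad f e g h x + minUpperGrad e f g h x = g x + h x :=
    (measure_eq_zero_iff_ae_notMem.mp hnull).mono fun x hx =>
      minUpperGrad_add_minUpperGrad_swap hx
  calc _ ≤ ∫⁻ x, minUpperGrad f e g h x ∂μ + ∫⁻ x, minUpperGrad e f g h x ∂μ := by
        simpa only [Measure.restrict_univ] using add_le_add
          (gradEnergy_le_setLIntegral (hg.min hf he hh hint))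
          (gradEnergy_le_setLIntegral (hg.max hf he hh hint))
    _ = ∫⁻ x, (g x + h x) ∂μ := by
        rw [← lintegral_add_left (measurable_minUpperGrad hf.measurable he.measurable hg.1 hh.1),
          lintegral_congr_ae hae]

end WeakUpperGradients

section LocallyLipschitz

variable {X : Type*} [MetricSpace X]

lemma locLipschitzOn_univ_iff {u : X → ℝ} : LocLipschitzOn u univ ↔ LocallyLipschitz u :=
  locallyLipschitzOn_univ

lemma LocallyLipschitz.add_const {u : X → ℝ} (hu : LocallyLipschitz u) (c : ℝ) :
    LocallyLipschitz fun x => u x + c :=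
  (isometry_add_right c).lipschitz.locallyLipschitz.comp hu

end LocallyLipschitz

section Variation

variable {X : Type*} [MetricSpace X] [MeasurableSpace X] {μ : Measure X}

lemma isFiniteMeasureOnCompacts_of_measure_ball_lt_top
    (h : ∀ (x : X) (r : ℝ), 0 < r → μ (ball x r) < ⊤) : IsFiniteMeasureOnCompacts μ := by
  refine ⟨fun K hK => ?_⟩
  rcases K.eq_empty_or_nonempty with rfl | ⟨x, -⟩
  · simp
  obtain ⟨r, hr, hKr⟩ := hK.isBounded.subset_ball_lt 0 x
  exact (measure_mono hKr).trans_lt (h x r hr)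

lemma TendstoL1loc.comp_strictMono {u : ℕ → X → ℝ} {v : X → ℝ} {W : Set X}
    (h : TendstoL1loc μ W u v) {φ : ℕ → ℕ} (hφ : StrictMono φ) :
    TendstoL1loc μ W (fun i => u (φ i)) v :=
  fun W' h₁ h₂ h₃ => (h W' h₁ h₂ h₃).comp hφ.tendsto_atTop

lemma TendstoL1loc.of_abs_sub_le {f e w : ℕ → X → ℝ} {u v w₀ : X → ℝ} {W : Set X}
    (hf : TendstoL1loc μ W f u) (he : TendstoL1loc μ W e v)
    (hmeas : ∀ i, Measurable fun x => f i x - u x)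
    (hle : ∀ i x, |w i x - w₀ x| ≤ |f i x - u x| + |e i x - v x|) :
    TendstoL1loc μ W w w₀ := by
  intro W' h₁ h₂ h₃
  refine tendsto_of_tendsto_of_tendsto_of_le_of_le tendsto_const_nhds
    (by simpa using (hf W' h₁ h₂ h₃).add (he W' h₁ h₂ h₃)) (fun _ => zero_le) fun i => ?_
  calc ∫⁻ x in W', ENNReal.ofReal |w i x - w₀ x| ∂μ
      ≤ ∫⁻ x in W', (ENNReal.ofReal |f i x - u x| + ENNReal.ofReal |e i x - v x|) ∂μ :=
        lintegral_mono fun x => (ENNReal.ofReal_le_ofReal (hle i x)).trans ENNReal.ofReal_add_le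
    _ = _ := lintegral_add_left (hmeas i).abs.ennreal_ofReal _

lemma TendstoL1loc.add_const [IsFiniteMeasureOnCompacts μ] {e : ℕ → X → ℝ} {v : X → ℝ}
    {W : Set X} (he : TendstoL1loc μ W e v) {c : ℕ → ℝ} (hc : Tendsto c atTop (𝓝 0)) :
    TendstoL1loc μ W (fun i x => e i x + c i) v := by
  intro W' h₁ h₂ h₃
  have hW' : μ W' ≠ ⊤ := ((measure_mono subset_closure).trans_lt h₂.measure_lt_top).ne
  have hc' : Tendsto (fun i => ENNReal.ofReal |c i| * μ W') atTop (𝓝 0) := by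
    simpa using ENNReal.Tendsto.mul_const (ENNReal.tendsto_ofReal hc.abs) (Or.inr hW')
  refine tendsto_of_tendsto_of_tendsto_of_le_of_le tendsto_const_nhds
    (by simpa using (he W' h₁ h₂ h₃).add hc') (fun _ => zero_le) fun i => ?_
  calc ∫⁻ x in W', ENNReal.ofReal |e i x + c i - v x| ∂μ
      ≤ ∫⁻ x in W', (ENNReal.ofReal |e i x - v x| + ENNReal.ofReal |c i|) ∂μ :=
        lintegral_mono fun x => (ENNReal.ofReal_le_ofReal
          (by rw [add_sub_right_comm]; exact abs_add_le _ _)).trans ENNReal.ofReal_add_le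
    _ = _ := by rw [lintegral_add_right _ measurable_const, setLIntegral_const]

lemma variationOn_le_liminf {u : ℕ → X → ℝ} {v : X → ℝ} {W : Set X}
    (hl : ∀ i, LocLipschitzOn (u i) W) (ht : TendstoL1loc μ W u v) :
    variationOn μ v W ≤ liminf (fun i => gradEnergy μ (u i) W) atTop :=
  iInf₂_le u ⟨hl, ht⟩

lemma exists_seq_gradEnergy_lt {v : X → ℝ} {W : Set X} {c : ℝ≥0∞}
    (h : variationOn μ v W < c) :
    ∃ u : ℕ → X → ℝ, (∀ i, LocLipschitzOn (u i) W) ∧ TendstoL1loc μ W u v ∧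
      ∀ i, gradEnergy μ (u i) W < c := by
  obtain ⟨u, ⟨hl, ht⟩, hlim⟩ : ∃ u : ℕ → X → ℝ,
      ((∀ i, LocLipschitzOn (u i) W) ∧ TendstoL1loc μ W u v) ∧
        liminf (fun i => gradEnergy μ (u i) W) atTop < c := by
    simpa only [variationOn, iInf_lt_iff, exists_prop] using h
  obtain ⟨φ, hφ, hφc⟩ :=
    extraction_of_frequently_atTop (frequently_lt_of_liminf_lt (h := hlim))
  exact ⟨fun i => u (φ i), fun i => hl (φ i), ht.comp_strictMono hφ, hφc⟩

variable [BorelSpace X]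

lemma variationOn_min_add_variationOn_max_le_of_tendsto {f e : ℕ → X → ℝ} {u v : X → ℝ}
    (hu : Measurable u) (hf : ∀ i, LocallyLipschitz (f i)) (he : ∀ i, LocallyLipschitz (e i))
    (hfu : TendstoL1loc μ univ f u) (hev : TendstoL1loc μ univ e v)
    (hnull : ∀ i, μ {x | f i x = e i x} = 0) {C : ℝ≥0∞}
    (hC : ∀ i, gradEnergy μ (f i) univ + gradEnergy μ (e i) univ ≤ C) :
    variationOn μ (fun x => min (u x) (v x)) univ +
      variationOn μ (fun x => max (u x) (v x)) univ ≤ C := by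
  have hmeas (i : ℕ) : Measurable fun x => f i x - u x := (hf i).continuous.measurable.sub hu
  calc _ ≤ liminf (fun i => gradEnergy μ (fun x => min (f i x) (e i x)) univ) atTop +
        liminf (fun i => gradEnergy μ (fun x => max (f i x) (e i x)) univ) atTop :=
        add_le_add
          (variationOn_le_liminf (fun i => locLipschitzOn_univ_iff.mpr ((hf i).min (he i)))
            (hfu.of_abs_sub_le hev hmeas fun _ _ => abs_min_sub_min_le_add _ _ _ _))
          (variationOn_le_liminf (fun i => locLipschitzOn_univ_iff.mpr ((hf i).max (he i)))
            (hfu.of_abs_sub_le hev hmeas fun _ _ => abs_max_sub_max_le_add _ _ _ _))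
    _ ≤ C := liminf_add_liminf_le_of_forall_add_le fun i =>
        (gradEnergy_min_add_gradEnergy_max_le (hf i).continuous (he i).continuous
          (hnull i)).trans (hC i)

lemma variationOn_min_add_variationOn_max_le [IsFiniteMeasureOnCompacts μ] [SigmaFinite μ]
    {u : X → ℝ} (hu : Measurable u) (v : X → ℝ) :
    variationOn μ (fun x => min (u x) (v x)) univ +
        variationOn μ (fun x => max (u x) (v x)) univ ≤
      variationOn μ u univ + variationOn μ v univ := by
  refine ENNReal.le_of_forall_pos_le_add fun ε hε hlt => ?_
  have hε2 : (ε : ℝ≥0∞) / 2 ≠ 0 := by simpa using hε.ne'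
  obtain ⟨f, hfl, hfu, hfE⟩ :=
    exists_seq_gradEnergy_lt (ENNReal.lt_add_right (ENNReal.add_lt_top.mp hlt).1.ne hε2)
  obtain ⟨e, hel, hev, heE⟩ :=
    exists_seq_gradEnergy_lt (ENNReal.lt_add_right (ENNReal.add_lt_top.mp hlt).2.ne hε2)
  have hf (i : ℕ) : LocallyLipschitz (f i) := locLipschitzOn_univ_iff.mp (hfl i)
  have he (i : ℕ) : LocallyLipschitz (e i) := locLipschitzOn_univ_iff.mp (hel i)
  -- shifting `e i` by a small constant makes the contact set `{f i = e i}` null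
  obtain ⟨c, hc, hnull⟩ := exists_tendsto_zero_measure_eq_add_eq_zero (μ := μ)
    (fun i => (hf i).continuous.measurable) (fun i => (he i).continuous.measurable)
  refine variationOn_min_add_variationOn_max_le_of_tendsto hu hf
    (fun i => (he i).add_const (c i)) hfu (hev.add_const hc) hnull fun i => ?_
  calc gradEnergy μ (f i) univ + gradEnergy μ (fun x => e i x + c i) univ
      = gradEnergy μ (f i) univ + gradEnergy μ (e i) univ := by rw [gradEnergy_add_const]
    _ ≤ (variationOn μ u univ + ε / 2) + (variationOn μ v univ + ε / 2) :=
        add_le_add (hfE i).le (heE i).le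
    _ = variationOn μ u univ + variationOn μ v univ + ε := by
        rw [add_add_add_comm, ENNReal.add_halves]

end Variation

section Perimeter

variable {X : Type*} [MetricSpace X] [MeasurableSpace X] {μ : Measure X}

lemma perimeter_univ (E : Set X) :
    perimeter μ E univ = variationOn μ (E.indicator fun _ => (1 : ℝ)) univ :=
  le_antisymm (iInf₂_le univ ⟨isOpen_univ, subset_rfl⟩)
    (le_iInf₂ fun _ hW => by rw [univ_subset_iff.mp hW.2])

variable [BorelSpace X] [IsFiniteMeasureOnCompacts μ] [SigmaFinite μ]

lemma perimeter_inter_add_perimeter_union_le {A : Set X} (hA : MeasurableSet A) (B : Set X) :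
    perimeter μ (A ∩ B) univ + perimeter μ (A ∪ B) univ ≤
      perimeter μ A univ + perimeter μ B univ := by
  simpa only [perimeter_univ, indicator_one_inter, indicator_one_union] using
    variationOn_min_add_variationOn_max_le (measurable_const.indicator hA)
      (B.indicator fun _ => (1 : ℝ))

lemma perimeter_union_le {A : Set X} (hA : MeasurableSet A) (B : Set X) :
    perimeter μ (A ∪ B) univ ≤ perimeter μ A univ + perimeter μ B univ :=
  le_add_self.trans (perimeter_inter_add_perimeter_union_le hA B)

lemma perimeter_inter_add_perimeter_inter_add_perimeter_union_le {F G D : Set X}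
    (hF : MeasurableSet F) (hG : MeasurableSet G) (hD : MeasurableSet D) (hFG : Disjoint F G)
    (hDFG : D ⊆ F ∪ G) (hPD : perimeter μ D univ ≠ ⊤) :
    perimeter μ (F ∩ D) univ + perimeter μ (G ∩ D) univ + perimeter μ (F ∪ G) univ ≤
      perimeter μ F univ + perimeter μ G univ + perimeter μ D univ := by
  have hinter : (F ∪ D) ∩ (G ∪ D) = D := by
    rw [← inter_union_distrib_right, hFG.inter_eq, empty_union]
  have hunion : (F ∪ D) ∪ (G ∪ D) = F ∪ G := by
    rw [union_union_union_comm, union_self, union_eq_left.mpr hDFG]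
  have hFD := perimeter_inter_add_perimeter_union_le (μ := μ) hF D
  have hGD := perimeter_inter_add_perimeter_union_le (μ := μ) hG D
  have hFGD := perimeter_inter_add_perimeter_union_le (μ := μ) (hF.union hD) (G ∪ D)
  rw [hinter, hunion] at hFGD
  refine ENNReal.le_of_add_le_add_right hPD ?_
  calc perimeter μ (F ∩ D) univ + perimeter μ (G ∩ D) univ + perimeter μ (F ∪ G) univ +
        perimeter μ D univ
      ≤ perimeter μ (F ∩ D) univ + perimeter μ (G ∩ D) univ +
        (perimeter μ (F ∪ D) univ + perimeter μ (G ∪ D) univ) := by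
        rw [add_assoc _ (perimeter μ (F ∪ G) univ), add_comm (perimeter μ (F ∪ G) univ)]
        gcongr
    _ = (perimeter μ (F ∩ D) univ + perimeter μ (F ∪ D) univ) +
        (perimeter μ (G ∩ D) univ + perimeter μ (G ∪ D) univ) := add_add_add_comm _ _ _ _
    _ ≤ (perimeter μ F univ + perimeter μ D univ) +
        (perimeter μ G univ + perimeter μ D univ) := add_le_add hFD hGD
    _ = perimeter μ F univ + perimeter μ G univ + perimeter μ D univ + perimeter μ D univ := by
        ring

lemma isDecomposableIn_of_subset_union {F G D : Set X} (hF : MeasurableSet F)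
    (hG : MeasurableSet G) (hD : MeasurableSet D) (hFG : Disjoint F G) (hDFG : D ⊆ F ∪ G)
    (hPF : perimeter μ F univ ≠ ⊤) (hPG : perimeter μ G univ ≠ ⊤)
    (hPD : perimeter μ D univ < ⊤)
    (hP : perimeter μ (F ∪ G) univ = perimeter μ F univ + perimeter μ G univ)
    (hμF : 0 < μ (F ∩ D)) (hμG : 0 < μ (G ∩ D)) : IsDecomposableIn μ D univ := by
  have hsplit : perimeter μ (F ∩ D) univ + perimeter μ (G ∩ D) univ ≤ perimeter μ D univ := by
    have h := perimeter_inter_add_perimeter_inter_add_perimeter_union_le hF hG hD hFG hDFG hPD.ne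
    rw [hP, add_comm (perimeter μ F univ + _)] at h
    exact ENNReal.le_of_add_le_add_right (ENNReal.add_ne_top.mpr ⟨hPF, hPG⟩) h
  have hpieces : (F ∩ D) ∪ (G ∩ D) = D := by
    rw [← union_inter_distrib_right, inter_eq_right.mpr hDFG]
  refine ⟨F ∩ D, G ∩ D, hF.inter hD, hG.inter hD, hFG.mono inter_subset_left inter_subset_left,
    by rw [hpieces, inter_univ], (le_self_add.trans hsplit).trans_lt hPD,
    (le_add_self.trans hsplit).trans_lt hPD, hμF, hμG, le_antisymm ?_ hsplit⟩
  calc perimeter μ D univ = perimeter μ ((F ∩ D) ∪ (G ∩ D)) univ := by rw [hpieces]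
    _ ≤ _ := perimeter_union_le (hF.inter hD) _

end Perimeter

theorem indecomposable_of_iUnion_monotone_general
    [ProperSpace X] (μ : Measure X)
    (hball : ∀ (x : X) (r : ℝ), 0 < r → 0 < μ (ball x r) ∧ μ (ball x r) < ⊤)
    (E : Set X)
    (En : ℕ → Set X) (hmeas : ∀ n, MeasurableSet (En n))
    (hfin : ∀ n, perimeter μ (En n) Set.univ < ⊤)
    (hmono : Monotone En)
    (hindec : ∀ n, IsIndecomposableIn μ (En n) Set.univ)
    (hunion : E = ⋃ n, En n) :
    IsIndecomposableIn μ E Set.univ := by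
  have : IsFiniteMeasureOnCompacts μ :=
    isFiniteMeasureOnCompacts_of_measure_ball_lt_top fun x r hr => (hball x r hr).2
  rintro ⟨F, G, hF, hG, hFG, hFGE, hPF, hPG, hμF, hμG, hPE⟩
  rw [inter_univ] at hFGE
  have hcover : F ∪ G = ⋃ n, En n := hFGE.trans hunion
  obtain ⟨n, hFn, hGn⟩ :=
    ((eventually_measure_inter_pos hmono (hcover ▸ subset_union_left) hμF).and
      (eventually_measure_inter_pos hmono (hcover ▸ subset_union_right) hμG)).exists
  exact hindec n (isDecomposableIn_of_subset_union hF hG (hmeas n) hFG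
    (hcover ▸ subset_iUnion En n) hPF.ne hPG.ne (hfin n) (by rw [hFGE]; exact hPE) hFn hGn)

/-- **Proposition 4.3 (stability).** The union of an increasing sequence of
indecomposable sets is indecomposable, provided it has finite perimeter. -/
theorem indecomposable_of_iUnion_monotone
    [ProperSpace X] (μ : Measure X)
    (hball : ∀ (x : X) (r : ℝ), 0 < r → 0 < μ (ball x r) ∧ μ (ball x r) < ⊤)
    (E : Set X) (hE : MeasurableSet E) (hEfin : perimeter μ E Set.univ < ⊤)
    (En : ℕ → Set X) (hmeas : ∀ n, MeasurableSet (En n))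
    (hfin : ∀ n, perimeter μ (En n) Set.univ < ⊤)
    (hmono : Monotone En)
    (hindec : ∀ n, IsIndecomposableIn μ (En n) Set.univ)
    (hunion : E = ⋃ n, En n) :
    IsIndecomposableIn μ E Set.univ :=
  indecomposable_of_iUnion_monotone_general μ hball E En hmeas hfin hmono hindec hunion
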